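/- Let n ≥ 2 and let {H_iα_i}_{i=1}^{s} be a coset partition of the free group F_n, where H_i < F_n has finite index d_i, α_i ∈ F_n, and 1 < d_1 ≤ … ≤ d_s. Let r be an integer with 4 ≤ r ≤ s−1. For w ∈ F_n let o_{*i}(w) be the least positive integer m with w^m ∈ α_i⁻¹H_iα_i, let o_max(w) = max{o_{*i}(w) : 1 ≤ i ≤ s}, let p be the smallest prime dividing o_max(w), and let # = |{i : o_{*i}(w) = o_max(w)}|. If there exists w ∈ F_n with o_max(w) > d_{s-r} and at least one of the following holds: p ≥ r, or # = p, or # ≥ r + 1, then the partition has multiplicity, i.e., d_i = d_j for some i ≠ j. -/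

import Mathlib

open Finset

/-- If `o` is the least positive natural with `x^o ∈ H`, then for all integers `m`,
`x^m ∈ H ↔ o ∣ m`. -/
lemma zpow_mem_iff_dvd {G : Type*} [Group G] {H : Subgroup G} {x : G} {o : ℕ}
    (hl : IsLeast {m : ℕ | 0 < m ∧ x ^ m ∈ H} o) (m : ℤ) :
    x ^ m ∈ H ↔ (o : ℤ) ∣ m := by
  obtain ⟨⟨hopos, homem⟩, hmin⟩ := hl
  have hoz : x ^ (o : ℤ) ∈ H := by rw [zpow_natCast]; exact homem
  constructor
  · intro hm
    have hr : x ^ (m % (o : ℤ)) ∈ H := by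
      have : m % (o : ℤ) = m - (o : ℤ) * (m / (o : ℤ)) := by
        rw [Int.emod_def]
      rw [this, zpow_sub, zpow_mul]
      exact H.mul_mem hm (H.inv_mem (H.zpow_mem hoz _))
    by_contra hdvd
    have hrpos : 0 < m % (o : ℤ) := by
      rcases (Int.emod_nonneg m (by exact_mod_cast hopos.ne' : (o:ℤ) ≠ 0)).lt_or_eq with h | h
      · exact h
      · exact absurd (Int.dvd_of_emod_eq_zero h.symm) hdvd
    have hrlt : m % (o : ℤ) < o := Int.emod_lt_of_pos m (by exact_mod_cast hopos)
    set t := (m % (o : ℤ)).toNat with ht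
    have htpos : 0 < t := by omega
    have htlt : t < o := by omega
    have : x ^ t ∈ H := by
      have : ((t : ℤ)) = m % (o : ℤ) := by omega
      rw [← zpow_natCast, this]; exact hr
    exact absurd (hmin ⟨htpos, this⟩) (by omega)
  · rintro ⟨c, rfl⟩
    rw [zpow_mul]
    exact H.zpow_mem hoz c

/-- Pigeonhole: some positive power `≤ index` lies in the subgroup. -/
lemma exists_pow_mem_le_index {G : Type*} [Group G] (H : Subgroup G)
    (hfin : H.index ≠ 0) (x : G) : ∃ m : ℕ, 0 < m ∧ m ≤ H.index ∧ x ^ m ∈ H := by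
  haveI : H.FiniteIndex := ⟨hfin⟩
  haveI : Fintype (G ⧸ H) := Fintype.ofFinite _
  have hcard : Fintype.card (Fin (H.index + 1)) > Fintype.card (G ⧸ H) := by
    have := H.index_eq_card
    simp only [Fintype.card_fin]
    rw [Nat.card_eq_fintype_card] at this
    omega
  obtain ⟨a, b, hab, heq⟩ := Fintype.exists_ne_map_eq_of_card_lt
    (fun k : Fin (H.index + 1) => ((x ^ (k : ℕ) : G) : G ⧸ H)) hcard
  wlog hlt : (a : ℕ) < (b : ℕ) generalizing a b
  · exact this b a hab.symm heq.symm (by omega)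
  have hmem : x ^ ((b : ℕ) - (a : ℕ)) ∈ H := by
    have := (QuotientGroup.eq (s := H)).mp heq
    have h2 : (x ^ (a : ℕ))⁻¹ * x ^ (b : ℕ) = x ^ ((b : ℕ) - (a : ℕ)) := by
      have hb : (b : ℕ) = (a : ℕ) + ((b : ℕ) - (a : ℕ)) := by omega
      calc (x ^ (a : ℕ))⁻¹ * x ^ (b : ℕ)
          = (x ^ (a : ℕ))⁻¹ * (x ^ (a : ℕ) * x ^ ((b : ℕ) - (a : ℕ))) := by
            rw [← pow_add, ← hb]
        _ = x ^ ((b : ℕ) - (a : ℕ)) := by group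
    rwa [h2] at this
  exact ⟨(b : ℕ) - (a : ℕ), by omega, by omega, hmem⟩

/-- Residue classes inside `range N`. -/
lemma range_filter_mod_eq_image {N o c : ℕ} (ho : 0 < o) (hoN : o ∣ N) (hc : c < o) :
    (range N).filter (fun k => k % o = c) = (range (N / o)).image (fun t => c + t * o) := by
  ext k
  simp only [mem_filter, mem_range, mem_image]
  constructor
  · rintro ⟨hkN, hk⟩
    refine ⟨k / o, ?_, ?_⟩
    · exact Nat.div_lt_div_of_lt_of_dvd hoN hkN
    · rw [← hk]; exact (Nat.mod_add_div' k o).symm ▸ rfl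
  · rintro ⟨t, ht, rfl⟩
    constructor
    · have h1 : c + t * o < o + t * o := by omega
      have h2 : o + t * o = (t + 1) * o := by ring
      have h3 : (t + 1) * o ≤ (N / o) * o := by
        exact Nat.mul_le_mul_right o (by omega)
      rw [Nat.div_mul_cancel hoN] at h3
      omega
    · rw [Nat.add_mul_mod_self_right, Nat.mod_eq_of_lt hc]

lemma geom_sum_zero_of_pow_eq_one {x : ℂ} {n : ℕ} (hx : x ≠ 1) (hxn : x ^ n = 1) :
    ∑ k ∈ range n, x ^ k = 0 := by
  rw [geom_sum_eq hx, hxn]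
  simp

lemma pow_mod_eq_pow {M : Type*} [Monoid M] {x : M} {D : ℕ} (hx : x ^ D = 1) (a : ℕ) :
    x ^ (a % D) = x ^ a := by
  conv_rhs => rw [← Nat.mod_add_div a D]
  rw [pow_add, pow_mul, hx, one_pow, mul_one]

lemma moebius_divisor_sum (n : ℕ) :
    ∑ d ∈ n.divisors, (ArithmeticFunction.moebius d) = if n = 1 then 1 else 0 := by
  calc ∑ d ∈ n.divisors, (ArithmeticFunction.moebius d)
      = (ArithmeticFunction.moebius * ArithmeticFunction.zeta : ArithmeticFunction ℤ) n := by
        rw [ArithmeticFunction.coe_mul_zeta_apply]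
    _ = (1 : ArithmeticFunction ℤ) n := by rw [ArithmeticFunction.moebius_mul_coe_zeta]
    _ = if n = 1 then 1 else 0 := ArithmeticFunction.one_apply

/-- Partition of `range m` according to `gcd`. -/
lemma range_eq_biUnion_divisors (m : ℕ) (hm : m ≠ 0) :
    range m = m.divisors.biUnion
      (fun n => ((range n).filter n.Coprime).image (fun u => (m / n) * u)) := by
  ext k
  simp only [mem_range, mem_biUnion, Nat.mem_divisors, mem_image, mem_filter]
  constructor
  · intro hk
    have hmpos : 0 < m := Nat.pos_of_ne_zero hm
    set t := Nat.gcd m k with htdef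
    have htm : t ∣ m := Nat.gcd_dvd_left m k
    have htk : t ∣ k := Nat.gcd_dvd_right m k
    have htpos : 0 < t := Nat.gcd_pos_of_pos_left k hmpos
    refine ⟨m / t, ⟨Nat.div_dvd_of_dvd htm, hm⟩, k / t, ⟨?_, ?_⟩, ?_⟩
    · exact Nat.div_lt_div_of_lt_of_dvd htm hk
    · exact Nat.coprime_div_gcd_div_gcd htpos
    · rw [Nat.div_div_self htm hm, Nat.mul_div_cancel' htk]
  · rintro ⟨n, ⟨hnm, -⟩, u, ⟨hun, -⟩, rfl⟩
    have hnpos : 0 < n := by omega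
    have hdivpos : 0 < m / n := Nat.div_pos (Nat.le_of_dvd (Nat.pos_of_ne_zero hm) hnm) hnpos
    calc (m / n) * u < (m / n) * n := by
          exact (mul_lt_mul_iff_right₀ hdivpos).mpr hun
      _ = m := Nat.div_mul_cancel hnm

lemma divisors_images_disjoint {m : ℕ} (hm : m ≠ 0) :
    (m.divisors : Set ℕ).PairwiseDisjoint
      (fun n => ((range n).filter n.Coprime).image (fun u => (m / n) * u)) := by
  intro n hn n' hn' hne
  simp only [Finset.mem_coe, Nat.mem_divisors] at hn hn'
  dsimp only [Function.onFun]
  rw [Finset.disjoint_left]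
  rintro k hk hk'
  simp only [mem_image, mem_filter, mem_range] at hk hk'
  obtain ⟨u, ⟨hu, hcop⟩, rfl⟩ := hk
  obtain ⟨u', ⟨hu', hcop'⟩, he⟩ := hk'
  have key : ∀ (a : ℕ), a ∣ m → ∀ (b : ℕ), b < a → Nat.Coprime a b →
      Nat.gcd m ((m / a) * b) = m / a := by
    intro a ha b hb hab
    set c := m / a with hc
    have hma : m = c * a := (Nat.div_mul_cancel ha).symm
    rw [hma, Nat.gcd_mul_left, hab.gcd_eq_one, mul_one]
  have h1 := key n hn.1 u hu hcop
  have h2 := key n' hn'.1 u' hu' hcop'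
  rw [he] at h2
  have : m / n = m / n' := h1.symm.trans h2
  apply hne
  rw [← Nat.div_div_self hn.1 hm, this, Nat.div_div_self hn'.1 hm]

/-- Identity A : summing the "primitive `n`-th root packets" over divisors `n` of `m`. -/
lemma sum_divisors_coprime_pow {ζ : ℂ} {D : ℕ} (hD : 0 < D) (hζ : IsPrimitiveRoot ζ D)
    {m : ℕ} (hm : m ∣ D) :
    ∑ n ∈ m.divisors, ∑ u ∈ (range n).filter n.Coprime, ζ ^ ((D / n) * u)
      = if m = 1 then 1 else 0 := by
  have hm0 : m ≠ 0 := by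
    rintro rfl
    rw [Nat.zero_dvd] at hm
    omega
  have hstep : ∀ n ∈ m.divisors,
      ∑ u ∈ (range n).filter n.Coprime, ζ ^ ((D / n) * u)
        = ∑ k ∈ ((range n).filter n.Coprime).image (fun u => (m / n) * u), ζ ^ ((D / m) * k) := by
    intro n hn
    rw [Nat.mem_divisors] at hn
    have hnpos : 0 < n := Nat.pos_of_dvd_of_pos hn.1 (Nat.pos_of_ne_zero hm0)
    have hmn : 0 < m / n := Nat.div_pos (Nat.le_of_dvd (Nat.pos_of_ne_zero hm0) hn.1) hnpos
    rw [Finset.sum_image (by intro a _ b _ hab; exact Nat.eq_of_mul_eq_mul_left hmn hab)]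
    apply Finset.sum_congr rfl
    intro u _
    congr 1
    have : (D / m) * (m / n) = D / n := by
      rw [Nat.div_mul_div_comm hm hn.1, mul_comm D m, Nat.mul_div_mul_left _ _ (Nat.pos_of_ne_zero hm0)]
    rw [← mul_assoc, this]
  rw [Finset.sum_congr rfl hstep, ← Finset.sum_biUnion (divisors_images_disjoint hm0),
    ← range_eq_biUnion_divisors m hm0]
  have hexp : ∀ k, ζ ^ ((D / m) * k) = (ζ ^ (D / m)) ^ k := fun k => by rw [pow_mul]
  rw [Finset.sum_congr rfl (fun k _ => hexp k)]
  rcases eq_or_ne m 1 with rfl | hm1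
  · simp
  · rw [if_neg hm1]
    have hprim : IsPrimitiveRoot (ζ ^ (D / m)) m :=
      hζ.pow hD (by rw [Nat.div_mul_cancel hm])
    exact geom_sum_zero_of_pow_eq_one (hprim.ne_one (by omega)) hprim.pow_eq_one



lemma sum_coprime_pow_eq_moebius {ζ : ℂ} {D : ℕ} (hD : 0 < D) (hζ : IsPrimitiveRoot ζ D) :
    ∀ m, m ∣ D → ∑ u ∈ (range m).filter m.Coprime, ζ ^ ((D / m) * u)
      = ((ArithmeticFunction.moebius m : ℤ) : ℂ) := by
  intro m
  induction m using Nat.strong_induction_on with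
  | _ m ih =>
    intro hm
    have hm0 : m ≠ 0 := by rintro rfl; rw [Nat.zero_dvd] at hm; omega
    have hA := sum_divisors_coprime_pow hD hζ hm
    have hdiv : m.divisors = insert m m.properDivisors :=
      (Nat.insert_self_properDivisors hm0).symm
    rw [hdiv, Finset.sum_insert (Nat.self_notMem_properDivisors)] at hA
    have hrec : ∀ n ∈ m.properDivisors,
        ∑ u ∈ (range n).filter n.Coprime, ζ ^ ((D / n) * u)
          = ((ArithmeticFunction.moebius n : ℤ) : ℂ) := by
      intro n hn
      rw [Nat.mem_properDivisors] at hn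
      exact ih n hn.2 (hn.1.trans hm)
    rw [Finset.sum_congr rfl hrec] at hA
    have hB := moebius_divisor_sum m
    rw [hdiv, Finset.sum_insert (Nat.self_notMem_properDivisors)] at hB
    have hBc : ((ArithmeticFunction.moebius m : ℤ) : ℂ)
        + ∑ n ∈ m.properDivisors, ((ArithmeticFunction.moebius n : ℤ) : ℂ)
        = if m = 1 then 1 else 0 := by
      have := congrArg (fun z : ℤ => (z : ℂ)) hB
      push_cast at this ⊢
      simpa using this
    have := hA.trans hBc.symm
    linear_combination this

lemma sum_units_pow_eq_moebius {m : ℕ} [NeZero m] (hm : 0 < m) {η : ℂ} (hη : IsPrimitiveRoot η m) :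
    ∑ u : (ZMod m)ˣ, η ^ ((u : ZMod m).val)
      = ((ArithmeticFunction.moebius m : ℤ) : ℂ) := by
  have key := sum_coprime_pow_eq_moebius hm hη m dvd_rfl
  rw [Nat.div_self hm] at key
  simp only [one_mul] at key
  rw [← key]
  apply Finset.sum_bij (i := fun (u : (ZMod m)ˣ) _ => (u : ZMod m).val)
  · intro u _
    rw [mem_filter, mem_range]
    exact ⟨ZMod.val_lt _, (ZMod.val_coe_unit_coprime u).symm⟩
  · intro u _ u' _ h
    exact Units.ext (ZMod.val_injective m h)
  · intro b hb
    rw [mem_filter, mem_range] at hb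
    refine ⟨ZMod.unitOfCoprime b hb.2.symm, mem_univ _, ?_⟩
    rw [ZMod.coe_unitOfCoprime, ZMod.val_natCast, Nat.mod_eq_of_lt hb.1]
  · intro u _
    rfl

lemma card_fiber_mul_card_eq {A B : Type*} [Group A] [Group B] [Fintype A] [Fintype B]
    [DecidableEq B] (f : A →* B) (hf : Function.Surjective f) (b : B) :
    (univ.filter (fun a => f a = b)).card * Fintype.card B = Fintype.card A := by
  classical
  have hconst : ∀ b b' : B,
      (univ.filter (fun a => f a = b)).card = (univ.filter (fun a => f a = b')).card := by
    intro b b'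
    obtain ⟨a0, ha0⟩ := hf (b' * b⁻¹)
    apply Finset.card_bij (i := fun a _ => a0 * a)
    · intro a ha
      rw [mem_filter] at ha ⊢
      refine ⟨mem_univ _, ?_⟩
      rw [map_mul, ha0, ha.2, inv_mul_cancel_right]
    · intro a _ a' _ h
      exact mul_left_cancel h
    · intro a' ha'
      rw [mem_filter] at ha'
      refine ⟨a0⁻¹ * a', ?_, ?_⟩
      · rw [mem_filter]
        refine ⟨mem_univ _, ?_⟩
        rw [map_mul, map_inv, ha0, ha'.2, mul_inv_rev, inv_inv]
        group
      · rw [mul_inv_cancel_left]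
  have htot : Fintype.card A = ∑ b' : B, (univ.filter (fun a => f a = b')).card :=
    Finset.card_eq_sum_card_fiberwise (fun x _ => mem_univ _)
  rw [htot, Finset.sum_congr rfl (fun b' _ => hconst b' b), Finset.sum_const, smul_eq_mul,
    mul_comm]
  rfl

/-- Lam–Leung-type lower bound: a nonempty vanishing sum of distinct `D`-th roots of unity
has at least `D.minFac` terms. -/
lemma minFac_le_card_of_vanishing_sum {D : ℕ} (hD : 2 ≤ D) {ζ : ℂ} (hζ : IsPrimitiveRoot ζ D)
    {S : Finset ℕ} (hSlt : ∀ e ∈ S, e < D) (hne : S.Nonempty) (hsum : ∑ e ∈ S, ζ ^ e = 0) :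
    D.minFac ≤ S.card := by
  classical
  haveI : NeZero D := ⟨by omega⟩
  have hζD : ζ ^ D = 1 := hζ.pow_eq_one
  obtain ⟨e0, he0⟩ := hne
  -- rotate so that 0 is in the set
  set c := D - e0 with hc
  set S' := S.image (fun e => (e + c) % D) with hS'
  have hinj : Set.InjOn (fun e => (e + c) % D) S := by
    intro a ha b hb h
    have ha' := hSlt a ha; have hb' := hSlt b hb
    simp only at h
    have hmeq : a ≡ b [MOD D] := Nat.ModEq.add_right_cancel' c h
    have hab : a % D = b % D := hmeq
    rwa [Nat.mod_eq_of_lt ha', Nat.mod_eq_of_lt hb'] at hab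
  have hcard' : S'.card = S.card := Finset.card_image_of_injOn hinj
  have hS'lt : ∀ e ∈ S', e < D := by
    intro e he
    rw [hS', mem_image] at he
    obtain ⟨a, _, rfl⟩ := he
    exact Nat.mod_lt _ (by omega)
  have h0 : 0 ∈ S' := by
    rw [hS', mem_image]
    refine ⟨e0, he0, ?_⟩
    have he0D : e0 < D := hSlt e0 he0
    have h1 : e0 + c = D := by omega
    simp only [h1, Nat.mod_self]
  have hsum' : ∑ e ∈ S', ζ ^ e = 0 := by
    rw [hS', Finset.sum_image hinj]
    have : ∀ e ∈ S, ζ ^ ((e + c) % D) = ζ ^ c * ζ ^ e := by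
      intro e _
      rw [pow_mod_eq_pow hζD, pow_add, mul_comm]
    rw [Finset.sum_congr rfl this, ← Finset.mul_sum, hsum, mul_zero]
  set p := D.minFac with hp
  have hp2 : 2 ≤ p := (Nat.minFac_prime (by omega)).two_le
  -- Galois conjugates
  have hgal : ∀ j : ℕ, j.Coprime D → ∑ e ∈ S', ζ ^ (j * e) = 0 := by
    intro j hj
    set P : Polynomial ℚ := ∑ e ∈ S', Polynomial.X ^ e with hP
    have hPev : ∀ x : ℂ, Polynomial.aeval x P = ∑ e ∈ S', x ^ e := by
      intro x
      rw [hP, map_sum]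
      apply Finset.sum_congr rfl
      intro e _
      rw [map_pow, Polynomial.aeval_X]
    have hPζ : Polynomial.aeval ζ P = 0 := by rw [hPev, hsum']
    have hmin : minpoly ℚ ζ ∣ P := minpoly.dvd ℚ ζ hPζ
    have hprim' : IsPrimitiveRoot (ζ ^ j) D := hζ.pow_of_coprime j hj
    have hmineq : minpoly ℚ (ζ ^ j) = minpoly ℚ ζ := by
      rw [← Polynomial.cyclotomic_eq_minpoly_rat hζ (by omega),
        ← Polynomial.cyclotomic_eq_minpoly_rat hprim' (by omega)]
    have hPζj : Polynomial.aeval (ζ ^ j) P = 0 := by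
      obtain ⟨g, hg⟩ := hmin
      rw [hg, map_mul, ← hmineq, minpoly.aeval, zero_mul]
    rw [hPev] at hPζj
    rw [← hPζj]
    apply Finset.sum_congr rfl
    intro e _
    rw [pow_mul]
  set R : ℕ → ℂ := fun e => ∑ u : (ZMod D)ˣ, ζ ^ ((u : ZMod D).val * e) with hR
  have hRsum : ∑ e ∈ S', R e = 0 := by
    rw [hR]
    rw [Finset.sum_comm]
    apply Finset.sum_eq_zero
    intro u _
    exact hgal _ (ZMod.val_coe_unit_coprime u)
  have hR0 : R 0 = (Nat.totient D : ℂ) := by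
    rw [hR]
    simp only [mul_zero, pow_zero]
    rw [Finset.sum_const, nsmul_eq_mul, mul_one]
    congr 1
    rw [← ZMod.card_units_eq_totient]
    rfl
  have hbound : ∀ e ∈ S'.erase 0, ‖R e‖ * ((p : ℝ) - 1) ≤ (Nat.totient D : ℝ) := by
    intro e he
    rw [Finset.mem_erase] at he
    obtain ⟨he0', heS'⟩ := he
    have heD : e < D := hS'lt e heS'
    have hepos : 0 < e := Nat.pos_of_ne_zero he0'
    set g := Nat.gcd D e with hg
    have hgD : g ∣ D := Nat.gcd_dvd_left D e
    have hge : g ∣ e := Nat.gcd_dvd_right D e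
    have hgpos : 0 < g := Nat.gcd_pos_of_pos_left e (by omega)
    have hgle : g ≤ e := Nat.le_of_dvd hepos hge
    set D' := D / g with hD'
    have hDeq : D = g * D' := (Nat.mul_div_cancel' hgD).symm
    have hD'dvd : D' ∣ D := Nat.div_dvd_of_dvd hgD
    have hD'pos : 0 < D' := Nat.div_pos (Nat.le_of_dvd (by omega) hgD) hgpos
    have hD'1 : 1 < D' := by
      rcases Nat.lt_or_ge D' 2 with h | h
      · interval_cases D' <;> omega
      · omega
    haveI : NeZero D' := ⟨by omega⟩
    set η := ζ ^ e with hη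
    have hηprim : IsPrimitiveRoot η D' := by
      have h1 : IsPrimitiveRoot (ζ ^ g) D' := hζ.pow (by omega) hDeq
      have h2 := h1.pow_of_coprime (e / g) (Nat.coprime_div_gcd_div_gcd hgpos).symm
      rw [← pow_mul, Nat.mul_div_cancel' hge] at h2
      exact h2
    have hηD' : η ^ D' = 1 := hηprim.pow_eq_one
    set π := ZMod.unitsMap hD'dvd with hπ
    have hπval : ∀ u : (ZMod D)ˣ, ((π u : ZMod D')).val = (u : ZMod D).val % D' := by
      intro u
      have h1 : ((π u : ZMod D')) = ZMod.castHom hD'dvd (ZMod D') (u : ZMod D) := by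
        rw [hπ, ZMod.unitsMap_def]
        rfl
      have h2 : ZMod.castHom hD'dvd (ZMod D') (u : ZMod D)
          = (((u : ZMod D).val : ℕ) : ZMod D') := by
        have hval : (((u : ZMod D).val : ℕ) : ZMod D) = (u : ZMod D) := by
          rw [ZMod.natCast_val, ZMod.cast_id]
        conv_lhs => rw [← hval]
        rw [map_natCast]
      rw [h1, h2, ZMod.val_natCast]
    have hRe : R e = ((Nat.totient D / Nat.totient D' : ℕ) : ℂ)
        * ((ArithmeticFunction.moebius D' : ℤ) : ℂ) := by
      simp only [hR]
      have step1 : ∀ u : (ZMod D)ˣ, ζ ^ ((u : ZMod D).val * e) = η ^ ((π u : ZMod D')).val := by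
        intro u
        rw [hπval u, pow_mod_eq_pow hηD', hη, ← pow_mul, mul_comm e _]
      rw [Finset.sum_congr rfl (fun u _ => step1 u)]
      have step2 : ∑ u : (ZMod D)ˣ, η ^ ((π u : ZMod D')).val
          = ∑ u' ∈ (univ : Finset (ZMod D)ˣ).image π,
              (univ.filter (fun u => π u = u')).card • η ^ ((u' : ZMod D')).val :=
        Finset.sum_comp (fun u' : (ZMod D')ˣ => η ^ ((u' : ZMod D')).val) π
      rw [step2]
      have himg : (univ : Finset (ZMod D)ˣ).image π = univ :=
        Finset.image_univ_of_surjective (ZMod.unitsMap_surjective hD'dvd)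
      rw [himg]
      have hfib : ∀ u' : (ZMod D')ˣ,
          (univ.filter (fun u => π u = u')).card = Nat.totient D / Nat.totient D' := by
        intro u'
        have := card_fiber_mul_card_eq π (ZMod.unitsMap_surjective hD'dvd) u'
        have hcardD : Fintype.card (ZMod D)ˣ = Nat.totient D := ZMod.card_units_eq_totient D
        have hcardD' : Fintype.card (ZMod D')ˣ = Nat.totient D' := ZMod.card_units_eq_totient D'
        rw [hcardD, hcardD'] at this
        have htpos : 0 < Nat.totient D' := Nat.totient_pos.mpr (by omega)
        rw [← this, Nat.mul_div_cancel _ htpos]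
      rw [Finset.sum_congr rfl (fun u' _ => by rw [hfib u'])]
      rw [← Finset.smul_sum, sum_units_pow_eq_moebius (by omega) hηprim, nsmul_eq_mul]
    have hdvdtot : Nat.totient D' ∣ Nat.totient D := Nat.totient_dvd_of_dvd hD'dvd
    have htotpos : 0 < Nat.totient D' := Nat.totient_pos.mpr (by omega)
    have hmu : |(ArithmeticFunction.moebius D' : ℤ)| ≤ 1 := ArithmeticFunction.abs_moebius_le_one
    have hnorm : ‖R e‖ ≤ ((Nat.totient D / Nat.totient D' : ℕ) : ℝ) := by
      rw [hRe, norm_mul]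
      have h1 : ‖((Nat.totient D / Nat.totient D' : ℕ) : ℂ)‖
          = ((Nat.totient D / Nat.totient D' : ℕ) : ℝ) := by
        rw [Complex.norm_natCast]
      have h2 : ‖((ArithmeticFunction.moebius D' : ℤ) : ℂ)‖ ≤ 1 := by
        rw [Complex.norm_intCast]
        exact_mod_cast hmu
      calc ‖((Nat.totient D / Nat.totient D' : ℕ) : ℂ)‖ * ‖((ArithmeticFunction.moebius D' : ℤ) : ℂ)‖
          ≤ ‖((Nat.totient D / Nat.totient D' : ℕ) : ℂ)‖ * 1 := by
            apply mul_le_mul_of_nonneg_left h2 (norm_nonneg _)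
        _ = ((Nat.totient D / Nat.totient D' : ℕ) : ℝ) := by rw [mul_one, h1]
    -- φ(D') ≥ p - 1
    have hφD' : (p : ℕ) - 1 ≤ Nat.totient D' := by
      set ℓ := D'.minFac with hℓ
      have hℓprime : ℓ.Prime := Nat.minFac_prime (by omega)
      have hℓdvd : ℓ ∣ D' := Nat.minFac_dvd D'
      have hℓD : ℓ ∣ D := hℓdvd.trans hD'dvd
      have hpℓ : p ≤ ℓ := Nat.minFac_le_of_dvd hℓprime.two_le hℓD
      have h1 : Nat.totient ℓ ∣ Nat.totient D' := Nat.totient_dvd_of_dvd hℓdvd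
      have h2 : Nat.totient ℓ = ℓ - 1 := Nat.totient_prime hℓprime
      have h3 : Nat.totient ℓ ≤ Nat.totient D' := Nat.le_of_dvd htotpos h1
      omega
    -- conclude
    have hkey : ((Nat.totient D / Nat.totient D' : ℕ) : ℝ) * ((p : ℝ) - 1)
        ≤ (Nat.totient D : ℝ) := by
      have h1 : (Nat.totient D / Nat.totient D') * (p - 1) ≤ Nat.totient D := by
        calc (Nat.totient D / Nat.totient D') * (p - 1)
            ≤ (Nat.totient D / Nat.totient D') * Nat.totient D' := by
              apply Nat.mul_le_mul_left
              omega
          _ = Nat.totient D := Nat.div_mul_cancel hdvdtot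
      have hcast : ((p : ℝ) - 1) = ((p - 1 : ℕ) : ℝ) := by
        have : 1 ≤ p := by omega
        push_cast [Nat.cast_sub this]
        ring
      rw [hcast, ← Nat.cast_mul]
      exact_mod_cast h1
    calc ‖R e‖ * ((p : ℝ) - 1)
        ≤ ((Nat.totient D / Nat.totient D' : ℕ) : ℝ) * ((p : ℝ) - 1) := by
          apply mul_le_mul_of_nonneg_right hnorm
          have : (2 : ℝ) ≤ (p : ℝ) := by exact_mod_cast hp2
          linarith
      _ ≤ (Nat.totient D : ℝ) := hkey
  -- assemble
  have hsplit : R 0 + ∑ e ∈ S'.erase 0, R e = 0 := by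
    exact (Finset.add_sum_erase S' R h0).trans hRsum
  have hφpos : 0 < Nat.totient D := Nat.totient_pos.mpr (by omega)
  have hmain : (Nat.totient D : ℝ) * ((p : ℝ) - 1)
      ≤ ((S'.card - 1 : ℕ) : ℝ) * (Nat.totient D : ℝ) := by
    have h1 : (Nat.totient D : ℝ) = ‖∑ e ∈ S'.erase 0, R e‖ := by
      have : ∑ e ∈ S'.erase 0, R e = -(R 0) := by
        linear_combination hsplit
      rw [this, norm_neg, hR0, Complex.norm_natCast]
    have h2 : ‖∑ e ∈ S'.erase 0, R e‖ ≤ ∑ e ∈ S'.erase 0, ‖R e‖ := norm_sum_le _ _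
    have h3 : (∑ e ∈ S'.erase 0, ‖R e‖) * ((p : ℝ) - 1) ≤
        ∑ e ∈ S'.erase 0, (Nat.totient D : ℝ) := by
      rw [Finset.sum_mul]
      exact Finset.sum_le_sum hbound
    have h4 : ∑ e ∈ S'.erase 0, (Nat.totient D : ℝ)
        = ((S'.card - 1 : ℕ) : ℝ) * (Nat.totient D : ℝ) := by
      rw [Finset.sum_const, nsmul_eq_mul, Finset.card_erase_of_mem h0]
    have hp1 : (0 : ℝ) ≤ (p : ℝ) - 1 := by
      have : (2 : ℝ) ≤ (p : ℝ) := by exact_mod_cast hp2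
      linarith
    calc (Nat.totient D : ℝ) * ((p : ℝ) - 1)
        = ‖∑ e ∈ S'.erase 0, R e‖ * ((p : ℝ) - 1) := by rw [h1]
      _ ≤ (∑ e ∈ S'.erase 0, ‖R e‖) * ((p : ℝ) - 1) := by
          apply mul_le_mul_of_nonneg_right h2 hp1
      _ ≤ ∑ e ∈ S'.erase 0, (Nat.totient D : ℝ) := h3
      _ = ((S'.card - 1 : ℕ) : ℝ) * (Nat.totient D : ℝ) := h4
  have hfin : (p : ℝ) - 1 ≤ ((S'.card - 1 : ℕ) : ℝ) := by
    have hφR : (0 : ℝ) < (Nat.totient D : ℝ) := by exact_mod_cast hφpos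
    nlinarith [hmain]
  have hScard : 1 ≤ S'.card := Finset.card_pos.mpr ⟨0, h0⟩
  have : (p : ℝ) ≤ (S'.card : ℝ) := by
    have hcs : ((S'.card - 1 : ℕ) : ℝ) = (S'.card : ℝ) - 1 := by
      push_cast [Nat.cast_sub hScard]
      ring
    linarith [hfin, hcs.symm.le]
  rw [← hcard']
  exact_mod_cast this



/-- Let `4 ≤ r ≤ s - 1`. If for some `w ∈ F n` we have
`o_max(w) > d_{s-r}` (0-based: `d ⟨s-r-1,_⟩`) and either `p ≥ r`, or `# = p`, or `# ≥ r + 1`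
(where `p` is the smallest prime dividing `o_max(w)` and `#` the number of indices `i` with
`o_{*i}(w) = o_max(w)`), then the partition has multiplicity. -/
theorem multiplicity_of_omax_gt_d_sub_r
    (n s : ℕ) (hn : 2 ≤ n) (r : ℕ) (hr : 4 ≤ r) (hrs : r ≤ s - 1) (hs : 0 < s)
    (H : Fin s → Subgroup (FreeGroup (Fin n)))
    (α : Fin s → FreeGroup (Fin n))
    (d : Fin s → ℕ)
    (hind : ∀ i, (H i).index = d i)
    (hone : ∀ i, 1 < d i)
    (hmono : Monotone d)
    (hpart : ∀ x : FreeGroup (Fin n), ∃! i : Fin s, x * (α i)⁻¹ ∈ H i)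
    (hw : ∃ (w : FreeGroup (Fin n)) (o : Fin s → ℕ) (omax : ℕ),
        (∀ i, IsLeast {m : ℕ | 0 < m ∧ α i * w ^ m * (α i)⁻¹ ∈ H i} (o i)) ∧
        (∀ i, o i ≤ omax) ∧ (∃ i, o i = omax) ∧
        d ⟨s - r - 1, by omega⟩ < omax ∧
        (r ≤ omax.minFac ∨
         Set.ncard {i : Fin s | o i = omax} = omax.minFac ∨
         r + 1 ≤ Set.ncard {i : Fin s | o i = omax})) :
    ∃ i j, i ≠ j ∧ d i = d j := by
  classical
  obtain ⟨w, o, D, hleast, holeD, ⟨i₀, hi₀⟩, hDgt, hcase⟩ := hw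
  have hD3 : 3 ≤ D := by have := hone ⟨s - r - 1, by omega⟩; omega
  have hD2 : 2 ≤ D := by omega
  have hopos : ∀ i, 0 < o i := fun i => (hleast i).1.1
  set x : Fin s → FreeGroup (Fin n) := fun i => α i * w * (α i)⁻¹ with hx
  have hleast' : ∀ i, IsLeast {m : ℕ | 0 < m ∧ x i ^ m ∈ H i} (o i) := by
    intro i
    have hset : {m : ℕ | 0 < m ∧ x i ^ m ∈ H i}
        = {m : ℕ | 0 < m ∧ α i * w ^ m * (α i)⁻¹ ∈ H i} := by
      ext m
      simp only [Set.mem_setOf_eq, hx, conj_pow]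
    rw [hset]
    exact hleast i
  have hod : ∀ i, o i ≤ d i := by
    intro i
    obtain ⟨m, hm0, hmle, hmmem⟩ :=
      exists_pow_mem_le_index (H i) (by rw [hind i]; have := hone i; omega) (x i)
    have h1 := (hleast' i).2 ⟨hm0, hmmem⟩
    rw [hind i] at hmle
    omega
  set Tf : Finset (Fin s) := Finset.univ.filter (fun i => o i = D) with hTf
  have hncard : Set.ncard {i : Fin s | o i = D} = Tf.card := by
    rw [hTf, ← Set.ncard_coe_finset]
    congr 1
    ext i
    simp
  have hTsub : Tf ⊆ Finset.univ.filter (fun i : Fin s => s - r ≤ (i : ℕ)) := by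
    intro i hi
    rw [hTf, Finset.mem_filter] at hi
    rw [Finset.mem_filter]
    refine ⟨Finset.mem_univ _, ?_⟩
    by_contra hlt
    push_neg at hlt
    have hle : i ≤ (⟨s - r - 1, by omega⟩ : Fin s) := by
      rw [Fin.le_def]
      simp only
      omega
    have h1 := hmono hle
    have h2 := hod i
    omega
  have hcardIco : (Finset.univ.filter (fun i : Fin s => s - r ≤ (i : ℕ))).card = r := by
    have h1 : (Finset.univ.filter (fun i : Fin s => s - r ≤ (i : ℕ))).card
        = (Finset.Ico (s - r) s).card := by
      apply Finset.card_bij (i := fun (i : Fin s) _ => (i : ℕ))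
      · intro i hi
        rw [Finset.mem_filter] at hi
        rw [Finset.mem_Ico]
        exact ⟨hi.2, i.isLt⟩
      · intro a _ b _ h
        exact Fin.val_injective h
      · intro k hk
        rw [Finset.mem_Ico] at hk
        exact ⟨⟨k, hk.2⟩, by rw [Finset.mem_filter]; exact ⟨Finset.mem_univ _, hk.1⟩, rfl⟩
    rw [h1, Nat.card_Ico]
    omega
  have hTr : Tf.card ≤ r := by
    calc Tf.card ≤ _ := Finset.card_le_card hTsub
      _ = r := hcardIco
  -- finite quotient
  haveI hHfin : ∀ i, (H i).FiniteIndex := fun i => ⟨by rw [hind i]; have := hone i; omega⟩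
  set K : Subgroup (FreeGroup (Fin n)) := ⨅ i, (H i).normalCore with hK
  haveI hKnormal : K.Normal := by
    constructor
    intro a ha g
    rw [hK, Subgroup.mem_iInf] at ha ⊢
    intro i
    exact ((H i).normalCore_normal).conj_mem a (ha i) g
  haveI hKfin : K.FiniteIndex := by
    rw [hK]
    exact Subgroup.finiteIndex_iInf fun i => @Subgroup.finiteIndex_normalCore _ _ (H i) (hHfin i)
  set G := FreeGroup (Fin n) ⧸ K with hG
  haveI hGfin : Finite G := Subgroup.finite_quotient_of_finiteIndex (H := K)
  haveI : Fintype G := Fintype.ofFinite G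
  set π : FreeGroup (Fin n) →* G := QuotientGroup.mk' K with hπ
  have hπsurj : Function.Surjective π := QuotientGroup.mk'_surjective K
  have hπker : π.ker = K := QuotientGroup.ker_mk' K
  have hKle : ∀ i, K ≤ H i := fun i =>
    le_trans (iInf_le _ i) ((H i).normalCore_le)
  set H' : Fin s → Subgroup G := fun i => (H i).map π with hH'
  have hmem' : ∀ (i : Fin s) (y : FreeGroup (Fin n)), π y ∈ H' i ↔ y ∈ H i := by
    intro i y
    constructor
    · rintro ⟨h, hh, he⟩
      have hk : h⁻¹ * y ∈ K := by
        rw [← hπker, MonoidHom.mem_ker, map_mul, map_inv, he]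
        group
      have hy : y = h * (h⁻¹ * y) := by group
      rw [hy]
      exact (H i).mul_mem hh (hKle i hk)
    · intro hy
      exact ⟨y, hy, rfl⟩
  have hind' : ∀ i, (H' i).index = d i := by
    intro i
    show ((H i).map π).index = d i
    rw [(H i).index_map_eq hπsurj (by rw [hπker]; exact hKle i), hind i]
  set α' : Fin s → G := fun i => π (α i) with hα'
  set v : G := π w with hv
  set x' : Fin s → G := fun i => α' i * v * (α' i)⁻¹ with hx'
  have hx'π : ∀ i, x' i = π (x i) := by
    intro i
    rw [hx', hx]
    simp only [map_mul, map_inv]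
    rfl
  have hchar : ∀ (i : Fin s) (m : ℤ), x' i ^ m ∈ H' i ↔ (o i : ℤ) ∣ m := by
    intro i m
    apply zpow_mem_iff_dvd
    constructor
    · refine ⟨hopos i, ?_⟩
      rw [hx'π, ← map_pow, hmem']
      exact (hleast' i).1.2
    · rintro m' ⟨hm'0, hm'⟩
      apply (hleast' i).2
      refine ⟨hm'0, ?_⟩
      rw [hx'π, ← map_pow, hmem'] at hm'
      exact hm'
  have hpart' : ∀ y : G, ∃! i, y * (α' i)⁻¹ ∈ H' i := by
    intro y
    obtain ⟨z, rfl⟩ := hπsurj y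
    obtain ⟨i, hi, huniq⟩ := hpart z
    have hrw : ∀ j : Fin s, π z * (α' j)⁻¹ = π (z * (α j)⁻¹) := by
      intro j
      rw [hα']
      simp only [map_mul, map_inv]
    refine ⟨i, ?_, ?_⟩
    · dsimp only
      rw [hrw, hmem']
      exact hi
    · intro j hj
      rw [hrw, hmem'] at hj
      exact huniq j hj
  set N := orderOf v with hN
  have hNpos : 0 < N := orderOf_pos v
  have hvN : v ^ N = 1 := pow_orderOf_eq_one v
  have hoNnat : ∀ i, o i ∣ N := by
    intro i
    have h1 : x' i ^ ((N : ℤ)) = 1 := by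
      rw [hx', conj_zpow, zpow_natCast, hvN]
      group
    have h2 : x' i ^ ((N : ℤ)) ∈ H' i := by rw [h1]; exact Subgroup.one_mem _
    rw [hchar] at h2
    exact_mod_cast h2
  have hDN : D ∣ N := hi₀ ▸ hoNnat i₀
  have hNDpos : 0 < N / D := Nat.div_pos (Nat.le_of_dvd hNpos hDN) (by omega)
  -- fibers over orbits
  set Fib : G → Fin s → Finset ℕ :=
    fun g i => (Finset.range N).filter (fun k => g * v ^ k * (α' i)⁻¹ ∈ H' i) with hFib
  have hFibmem : ∀ g k i, k ∈ Fib g i ↔ k < N ∧ g * v ^ k * (α' i)⁻¹ ∈ H' i := by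
    intro g k i
    rw [hFib]
    simp [Finset.mem_filter, Finset.mem_range]
  have hshift : ∀ (g : G) (i : Fin s) (k k₀ : ℕ), g * v ^ k₀ * (α' i)⁻¹ ∈ H' i →
      (g * v ^ k * (α' i)⁻¹ ∈ H' i ↔ (o i : ℤ) ∣ ((k : ℤ) - (k₀ : ℤ))) := by
    intro g i k k₀ h₀
    have hfactor : g * v ^ k * (α' i)⁻¹
        = (g * v ^ k₀ * (α' i)⁻¹) * (x' i ^ ((k : ℤ) - (k₀ : ℤ))) := by
      rw [hx', conj_zpow]
      have hsplitv : v ^ (k : ℤ) = v ^ (k₀ : ℤ) * v ^ ((k : ℤ) - (k₀ : ℤ)) := by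
        rw [← zpow_add]
        congr 1
        ring
      rw [show g * v ^ k = g * v ^ ((k : ℤ)) by rw [zpow_natCast], hsplitv,
        show v ^ (k₀ : ℤ) = v ^ k₀ by rw [zpow_natCast]]
      group
    rw [hfactor, mul_mem_cancel_left h₀]
    exact hchar i _
  have hcover : ∀ (g : G) (k : ℕ), k < N → ∃! i, k ∈ Fib g i := by
    intro g k hk
    obtain ⟨i, hi, huniq⟩ := hpart' (g * v ^ k)
    refine ⟨i, ?_, ?_⟩
    · dsimp only
      rw [hFibmem]
      exact ⟨hk, hi⟩
    · intro j hj
      rw [hFibmem] at hj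
      exact huniq j hj.2
  have hFibstruct : ∀ (g : G) (i : Fin s) (k₀ : ℕ), k₀ ∈ Fib g i →
      Fib g i = (Finset.range N).filter (fun k => k % o i = k₀ % o i) := by
    intro g i k₀ hk₀
    rw [hFibmem] at hk₀
    ext k
    rw [hFibmem, Finset.mem_filter, Finset.mem_range]
    constructor
    · rintro ⟨hkN, hkmem⟩
      refine ⟨hkN, ?_⟩
      have hdvd := (hshift g i k k₀ hk₀.2).mp hkmem
      have hmeq : k₀ ≡ k [MOD o i] := (Nat.modEq_iff_dvd).mpr hdvd
      exact hmeq.symm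
    · rintro ⟨hkN, hmod⟩
      refine ⟨hkN, ?_⟩
      have hmeq : k₀ ≡ k [MOD o i] := (Nat.ModEq.symm hmod : k₀ % o i = k % o i)
      exact (hshift g i k k₀ hk₀.2).mpr ((Nat.modEq_iff_dvd).mp hmeq)
  have hinj_aff : ∀ (c oi : ℕ), 0 < oi → Function.Injective (fun t => c + t * oi) := by
    intro c oi hoi a b h
    simp only at h
    have : a * oi = b * oi := by omega
    exact Nat.eq_of_mul_eq_mul_right hoi this
  have hFibcard : ∀ (g : G) (i : Fin s), (Fib g i).Nonempty → (Fib g i).card = N / o i := by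
    intro g i hne
    obtain ⟨k₀, hk₀⟩ := hne
    rw [hFibstruct g i k₀ hk₀,
      range_filter_mod_eq_image (hopos i) (hoNnat i) (Nat.mod_lt _ (hopos i)),
      Finset.card_image_of_injective _ (hinj_aff _ _ (hopos i)), Finset.card_range]
  obtain ⟨ζ, hζ⟩ : ∃ ζ : ℂ, IsPrimitiveRoot ζ D :=
    ⟨_, Complex.isPrimitiveRoot_exp D (by omega)⟩
  have hζD1 : ζ ^ D = 1 := hζ.pow_eq_one
  have hζN : ζ ^ N = 1 := by
    obtain ⟨t, ht⟩ := hDN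
    rw [ht, pow_mul, hζD1, one_pow]
  have hζne1 : ζ ≠ 1 := hζ.ne_one (by omega)
  -- the per-orbit vanishing-sum bound
  have hq : ∀ g : G, (Tf.filter (fun i => (Fib g i).Nonempty)).Nonempty →
      D.minFac ≤ (Tf.filter (fun i => (Fib g i).Nonempty)).card := by
    intro g hgne
    set TB := Tf.filter (fun i => (Fib g i).Nonempty) with hTB
    set e : Fin s → ℕ := fun i =>
      if h : (Fib g i).Nonempty then (Fib g i).min' h % o i else 0 with he
    have hemem : ∀ i : Fin s, (Fib g i).Nonempty → e i ∈ Fib g i ∧ e i < o i := by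
      intro i hne
      have hmin : (Fib g i).min' hne ∈ Fib g i := Finset.min'_mem _ _
      have heval : e i = (Fib g i).min' hne % o i := by rw [he]; simp only [dif_pos hne]
      have helt : e i < o i := by rw [heval]; exact Nat.mod_lt _ (hopos i)
      refine ⟨?_, helt⟩
      rw [hFibstruct g i _ hmin, Finset.mem_filter, Finset.mem_range]
      have hoN' : o i ≤ N := Nat.le_of_dvd hNpos (hoNnat i)
      refine ⟨by omega, ?_⟩
      rw [heval, Nat.mod_mod_of_dvd _ dvd_rfl]
    set B := (Finset.univ : Finset (Fin s)).filter (fun i => (Fib g i).Nonempty) with hB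
    have hbU : Finset.range N = B.biUnion (Fib g) := by
      ext k
      simp only [Finset.mem_range, Finset.mem_biUnion, hB, Finset.mem_filter,
        Finset.mem_univ, true_and]
      constructor
      · intro hk
        obtain ⟨i, hi, -⟩ := hcover g k hk
        exact ⟨i, ⟨k, hi⟩, hi⟩
      · rintro ⟨i, -, hk⟩
        rw [hFibmem] at hk
        exact hk.1
    have hdisj : (B : Set (Fin s)).PairwiseDisjoint (Fib g) := by
      intro i _ j _ hij
      dsimp only [Function.onFun]
      rw [Finset.disjoint_left]
      intro k hk hk'
      have hkN : k < N := by rw [hFibmem] at hk; exact hk.1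
      obtain ⟨iu, hiu, huniq⟩ := hcover g k hkN
      exact hij ((huniq i hk).trans (huniq j hk').symm)
    have hbig : ∑ i ∈ B, ∑ k ∈ Fib g i, ζ ^ k = 0 := by
      rw [← Finset.sum_biUnion hdisj, ← hbU]
      exact geom_sum_zero_of_pow_eq_one hζne1 hζN
    have hfib_eval : ∀ i ∈ B, ∑ k ∈ Fib g i, (ζ : ℂ) ^ k
        = if o i = D then ((N / D : ℕ) : ℂ) * ζ ^ e i else 0 := by
      intro i hiB
      rw [hB, Finset.mem_filter] at hiB
      have hne := hiB.2
      obtain ⟨hemem', helt⟩ := hemem i hne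
      have hstruct : Fib g i = (Finset.range N).filter (fun k => k % o i = e i) := by
        rw [hFibstruct g i (e i) hemem', Nat.mod_eq_of_lt helt]
      rw [hstruct, range_filter_mod_eq_image (hopos i) (hoNnat i) helt,
        Finset.sum_image (fun a _ b _ h => hinj_aff _ _ (hopos i) h)]
      have hterm : ∀ t, (ζ : ℂ) ^ (e i + t * o i) = ζ ^ e i * (ζ ^ o i) ^ t := by
        intro t
        rw [pow_add, mul_comm t (o i), pow_mul]
      rw [Finset.sum_congr rfl (fun t _ => hterm t), ← Finset.mul_sum]
      by_cases hoD : o i = D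
      · rw [if_pos hoD, hoD, hζD1]
        simp only [one_pow, Finset.sum_const, Finset.card_range, nsmul_eq_mul, mul_one]
        ring
      · rw [if_neg hoD]
        have holt : o i < D := lt_of_le_of_ne (hi₀ ▸ holeD i) hoD
        have h1 : (ζ ^ o i) ≠ 1 := hζ.pow_ne_one_of_pos_of_lt (hopos i).ne' holt
        have h2 : (ζ ^ o i) ^ (N / o i) = 1 := by
          rw [← pow_mul, Nat.mul_div_cancel' (hoNnat i)]
          exact hζN
        rw [geom_sum_zero_of_pow_eq_one h1 h2, mul_zero]
    rw [Finset.sum_congr rfl hfib_eval, Finset.sum_ite, Finset.sum_const_zero, add_zero]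
      at hbig
    have hBfilter : B.filter (fun i => o i = D) = TB := by
      ext i
      rw [hTB, hTf, hB]
      simp only [Finset.mem_filter, Finset.mem_univ, true_and]
      tauto
    rw [hBfilter] at hbig
    have hvanish : ∑ i ∈ TB, ζ ^ e i = 0 := by
      have hND : ((N / D : ℕ) : ℂ) ≠ 0 := Nat.cast_ne_zero.mpr (by omega)
      rw [← Finset.mul_sum] at hbig
      exact (mul_eq_zero.mp hbig).resolve_left hND
    have heinj : Set.InjOn e TB := by
      intro i hi j hj hij
      rw [Finset.mem_coe, hTB, Finset.mem_filter] at hi hj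
      have h1 := (hemem i hi.2).1
      have h2 := (hemem j hj.2).1
      rw [hij] at h1
      have hkN : e j < N := by rw [hFibmem] at h2; exact h2.1
      obtain ⟨iu, -, huniq⟩ := hcover g (e j) hkN
      exact (huniq i h1).trans (huniq j h2).symm
    have hScard : (TB.image e).card = TB.card := Finset.card_image_of_injOn heinj
    have hSsum : ∑ el ∈ TB.image e, ζ ^ el = 0 := by
      rw [Finset.sum_image heinj]
      exact hvanish
    have hSlt : ∀ el ∈ TB.image e, el < D := by
      intro el hel
      rw [Finset.mem_image] at hel
      obtain ⟨i, hi, rfl⟩ := hel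
      rw [hTB, Finset.mem_filter] at hi
      have h1 := (hemem i hi.2).2
      have hoiD : o i = D := by
        have := hi.1
        rw [hTf, Finset.mem_filter] at this
        exact this.2
      omega
    have hSne : (TB.image e).Nonempty := hgne.image e
    have hfinal := minFac_le_card_of_vanishing_sum hD2 hζ hSlt hSne hSsum
    omega
  -- # ≥ p, hence # = p
  have h0fib : ∀ i : Fin s, 0 ∈ Fib (α' i) i := by
    intro i
    rw [hFibmem]
    refine ⟨hNpos, ?_⟩
    rw [pow_zero, mul_one, mul_inv_cancel]
    exact Subgroup.one_mem _
  have hTfi₀ : i₀ ∈ Tf := by rw [hTf, Finset.mem_filter]; exact ⟨Finset.mem_univ _, hi₀⟩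
  have hp_le : D.minFac ≤ Tf.card := by
    have h1 : (Tf.filter (fun i => (Fib (α' i₀) i).Nonempty)).Nonempty :=
      ⟨i₀, by rw [Finset.mem_filter]; exact ⟨hTfi₀, ⟨0, h0fib i₀⟩⟩⟩
    calc D.minFac ≤ _ := hq (α' i₀) h1
      _ ≤ Tf.card := Finset.card_le_card (Finset.filter_subset _ _)
  have hTp : Tf.card = D.minFac := by
    rw [hncard] at hcase
    rcases hcase with h | h | h <;> omega
  have hfull : ∀ g : G, (Tf.filter (fun i => (Fib g i).Nonempty)).Nonempty →
      ∀ i ∈ Tf, (Fib g i).Nonempty := by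
    intro g hgne i hi
    have h1 := hq g hgne
    have h2 : Tf.filter (fun i => (Fib g i).Nonempty) = Tf :=
      Finset.eq_of_subset_of_card_le (Finset.filter_subset _ _) (by omega)
    rw [← h2] at hi
    exact (Finset.mem_filter.mp hi).2
  -- the counting over orbits
  set Q := G ⧸ Subgroup.zpowers v with hQ
  haveI : Fintype Q := Fintype.ofFinite Q
  set Cst : Fin s → Finset G := fun i =>
    Finset.univ.filter (fun g => g * (α' i)⁻¹ ∈ H' i) with hCst
  have horbfib : ∀ (q : Q) (i : Fin s),
      ((Cst i).filter (fun g : G => ((g : Q) = q))).card = (Fib (Quotient.out q) i).card := by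
    intro q i
    set gq := Quotient.out q with hgq
    have hgqq : ((gq : G) : Q) = q := QuotientGroup.out_eq' q
    symm
    apply Finset.card_bij (i := fun k _ => gq * v ^ k)
    · intro k hk
      rw [hFibmem] at hk
      rw [Finset.mem_filter, hCst]
      refine ⟨Finset.mem_filter.mpr ⟨Finset.mem_univ _, hk.2⟩, ?_⟩
      rw [← hgqq]
      symm
      rw [QuotientGroup.eq]
      exact Subgroup.mem_zpowers_iff.mpr ⟨(k : ℤ), by rw [zpow_natCast]; group⟩
    · intro a ha b hb h
      rw [hFibmem] at ha hb
      have hv' : v ^ a = v ^ b := mul_left_cancel h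
      rw [pow_eq_pow_iff_modEq] at hv'
      have : a % N = b % N := hv'
      rwa [Nat.mod_eq_of_lt ha.1, Nat.mod_eq_of_lt hb.1] at this
    · intro y hy
      rw [Finset.mem_filter] at hy
      have hy2 : ((y : G) : Q) = q := hy.2
      have hz : gq⁻¹ * y ∈ Subgroup.zpowers v := by
        rw [← QuotientGroup.eq]
        rw [hgqq, hy2]
      obtain ⟨m, hm⟩ := Subgroup.mem_zpowers_iff.mp hz
      have hNz : (0 : ℤ) < (N : ℤ) := by exact_mod_cast hNpos
      set k := (m % (N : ℤ)).toNat with hkdef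
      have h1 : 0 ≤ m % (N : ℤ) := Int.emod_nonneg m (by omega)
      have h2 : m % (N : ℤ) < N := Int.emod_lt_of_pos m hNz
      have hkN : k < N := by omega
      have hvk : v ^ k = v ^ m := by
        have hsub : m - (k : ℤ) = (N : ℤ) * (m / (N : ℤ)) := by
          have hk' : (k : ℤ) = m % (N : ℤ) := by omega
          rw [hk', Int.emod_def]
          ring
        have h3 : v ^ ((N : ℤ) * (m / (N : ℤ))) = 1 := by
          rw [zpow_mul, zpow_natCast, hvN, one_zpow]
        calc v ^ k = v ^ ((k : ℤ)) := (zpow_natCast v k).symm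
          _ = v ^ ((k : ℤ)) * v ^ ((N : ℤ) * (m / (N : ℤ))) := by rw [h3, mul_one]
          _ = v ^ ((k : ℤ) + (N : ℤ) * (m / (N : ℤ))) := (zpow_add v _ _).symm
          _ = v ^ m := by congr 1; omega
      have hyk : gq * v ^ k = y := by
        rw [hvk, hm]
        group
      refine ⟨k, ?_, hyk⟩
      rw [hFibmem]
      refine ⟨hkN, ?_⟩
      rw [hyk]
      exact (Finset.mem_filter.mp hy.1).2
  have hCcount : ∀ i ∈ Tf, (Cst i).card
      = ∑ q : Q, (if (Tf.filter (fun t => (Fib (Quotient.out q) t).Nonempty)).Nonempty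
          then N / D else 0) := by
    intro i hi
    have hoiD : o i = D := by
      rw [hTf, Finset.mem_filter] at hi
      exact hi.2
    rw [Finset.card_eq_sum_card_fiberwise
      (f := fun g : G => (g : Q)) (t := Finset.univ) (fun g _ => Finset.mem_univ _)]
    apply Finset.sum_congr rfl
    intro q _
    rw [horbfib q i]
    by_cases hcond : (Tf.filter (fun t => (Fib (Quotient.out q) t).Nonempty)).Nonempty
    · rw [if_pos hcond]
      have hne : (Fib (Quotient.out q) i).Nonempty := hfull _ hcond i hi
      rw [hFibcard _ _ hne, hoiD]
    · rw [if_neg hcond]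
      rw [Finset.card_eq_zero]
      by_contra hne
      rw [← Ne, ← Finset.nonempty_iff_ne_empty] at hne
      exact hcond ⟨i, Finset.mem_filter.mpr ⟨hi, hne⟩⟩
  -- conclude
  have hp2' : 2 ≤ D.minFac := (Nat.minFac_prime (by omega : D ≠ 1)).two_le
  have h2card : 1 < Tf.card := by omega
  obtain ⟨i, hiT, j, hjT, hij⟩ := Finset.one_lt_card.mp h2card
  refine ⟨i, j, hij, ?_⟩
  have hCC : (Cst i).card = (Cst j).card := by
    rw [hCcount i hiT, hCcount j hjT]
  have hCd : ∀ t : Fin s, (Cst t).card * d t = Fintype.card G := by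
    intro t
    have hb : (Cst t).card = (Finset.univ.filter (fun g : G => g ∈ H' t)).card := by
      apply Finset.card_bij (i := fun g _ => g * (α' t)⁻¹)
      · intro g hg
        rw [hCst, Finset.mem_filter] at hg
        rw [Finset.mem_filter]
        exact ⟨Finset.mem_univ _, hg.2⟩
      · intro a _ b _ h
        exact mul_right_cancel h
      · intro y hy
        rw [Finset.mem_filter] at hy
        refine ⟨y * α' t, ?_, by group⟩
        rw [hCst, Finset.mem_filter]
        refine ⟨Finset.mem_univ _, ?_⟩
        rw [mul_inv_cancel_right]
        exact hy.2
    have hsub : (Finset.univ.filter (fun g : G => g ∈ H' t)).card = Nat.card (H' t) := by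
      rw [Nat.card_eq_fintype_card, Fintype.card_subtype]
    have hmul : Nat.card (H' t) * (H' t).index = Nat.card G :=
      Subgroup.card_mul_index (H' t)
    rw [hb, hsub, ← hind' t]
    rw [hmul, Nat.card_eq_fintype_card]
  have hC0 : (Cst i).card ≠ 0 := by
    have : α' i ∈ Cst i := by
      rw [hCst, Finset.mem_filter]
      refine ⟨Finset.mem_univ _, ?_⟩
      rw [mul_inv_cancel]
      exact Subgroup.one_mem _
    exact Finset.card_ne_zero_of_mem this
  have h1 := hCd i
  have h2 := hCd j
  rw [hCC] at h1
  have := h1.trans h2.symm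
  exact Nat.eq_of_mul_eq_mul_left (by omega) this
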